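/- Let p₁, p₂ be probability densities on ℝ with CDFs F₁, F₂, and let c : [0,1]² → [0,∞) be a copula density (nonnegative, with ∫₀¹ c(u, v) dv = 1 for a.e. u and ∫₀¹ c(u, v) du = 1 for a.e. v). Define the partially wrapped joint density p^{PW}(φ, y) = ∑_{k∈ℤ} c(F₁(φ + 2πk), F₂(y)) · p₁(φ + 2πk) · p₂(y) for (φ, y) ∈ [0, 2π) × ℝ. Then marginalizing over φ ∈ [0, 2π) yields p₂: ∫₀^{2π} p^{PW}(φ, y) dφ = p₂(y) for a.e. y. -/

import Mathlib

/-!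
Since `[0, 2π)` is a fundamental domain for `2πℤ`, integrating the sum over `k` on `[0, 2π)` is
integrating over all of `ℝ`. After pulling out `p₂ y`, the integral `∫ c(F₁ x, F₂ y) p₁ x dx`
becomes `∫₀¹ c(u, F₂ y) du`, because the continuous CDF `F₁` pushes the law with density `p₁`
forward to the uniform law on `(0, 1)` (probability integral transform). The same transform for
`F₂` turns the uniform-a.e. marginal condition on `c` into a `p₂`-a.e. statement in `y`, and where
`p₂ y = 0` both sides vanish.
-/

open MeasureTheory Real Set Filter ENNReal ProbabilityTheory

theorem continuous_setIntegral_Iic {μ : Measure ℝ} [NullSingletonClass μ] {f : ℝ → ℝ}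
    (hf : Integrable f μ) : Continuous fun b => ∫ x in Iic b, f x ∂μ :=
  continuous_iff_continuousAt.2 fun b =>
    (hf.integrableOn.continuousOn_Iic_primitive_Iic (a₀ := b + 1)).continuousAt
      (Iic_mem_nhds (lt_add_one b))

theorem Monotone.exists_preimage_Iic_eq_Iic {F : ℝ → ℝ} (hmono : Monotone F)
    (hcont : Continuous F) {u a b : ℝ} (ha : F a ≤ u) (hb : u < F b) :
    ∃ x, F x = u ∧ F ⁻¹' Iic u = Iic x := by
  set S := F ⁻¹' Iic u
  have hne : S.Nonempty := ⟨a, ha⟩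
  have hbdd : BddAbove S :=
    ⟨b, fun y hy => le_of_not_gt fun hby => ((hmono hby.le).trans hy).not_gt hb⟩
  have hclosed : IsClosed S := isClosed_Iic.preimage hcont
  have hS : S = Iic (sSup S) := by
    rw [← lowerClosure_eq_Iic_csSup hne hbdd hclosed]
    exact (IsLowerSet.lowerClosure fun x y hyx hx => (hmono hyx).trans hx).symm
  refine ⟨sSup S, le_antisymm (hclosed.csSup_mem hne hbdd) ?_, hS⟩
  refine _root_.ge_of_tendsto (hcont.continuousWithinAt (s := Ioi (sSup S)))
    (eventually_nhdsWithin_of_forall fun y hy => ?_)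
  have hyS : y ∉ S := by rw [hS]; exact fun h => (mem_Iic.1 h).not_gt hy
  exact (not_le.1 hyS).le

theorem map_cdf_eq_restrict_Ioo (μ : Measure ℝ) [IsProbabilityMeasure μ]
    (hcont : Continuous (cdf μ)) : μ.map (cdf μ) = volume.restrict (Ioo 0 1) := by
  have : IsFiniteMeasure (volume.restrict (Ioo (0 : ℝ) 1)) :=
    isFiniteMeasure_restrict.2 measure_Ioo_lt_top.ne
  refine Measure.ext_of_Iic _ _ fun u => ?_
  rw [Measure.map_apply (monotone_cdf μ).measurable measurableSet_Iic,
    Measure.restrict_apply' measurableSet_Ioo]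
  rcases le_or_gt 1 u with h1u | hu1
  · have hpre : cdf μ ⁻¹' Iic u = univ := eq_univ_of_forall fun x => (cdf_le_one μ x).trans h1u
    rw [hpre, inter_eq_self_of_subset_right fun x hx => hx.2.le.trans h1u, measure_univ,
      Real.volume_Ioo, sub_zero, ofReal_one]
  by_cases hex : ∃ a, cdf μ a ≤ u
  · obtain ⟨a, ha⟩ := hex
    obtain ⟨b, hb⟩ := ((tendsto_cdf_atTop μ).eventually (eventually_gt_nhds hu1)).exists
    obtain ⟨x, hxu, hpre⟩ := (monotone_cdf μ).exists_preimage_Iic_eq_Iic hcont ha hb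
    have hinter : Iic u ∩ Ioo 0 1 = Ioc 0 u := by
      ext t; simp only [mem_inter_iff, mem_Iic, mem_Ioo, mem_Ioc]; grind
    rw [hpre, hinter, Real.volume_Ioc, sub_zero, ← hxu, ofReal_cdf]
  · push Not at hex
    have hu0 : u ≤ 0 := ge_of_tendsto' (tendsto_cdf_atBot μ) fun a => (hex a).le
    have hpre : cdf μ ⁻¹' Iic u = ∅ := eq_empty_of_forall_notMem fun a ha => (hex a).not_ge ha
    rw [hpre, ((Iic_disjoint_Ioi hu0).mono_right Ioo_subset_Ioi_self).inter_eq, measure_empty,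
      measure_empty]

theorem lintegral_Ico_tsum_add_mul {T : ℝ} (hT : 0 < T) {f : ℝ → ℝ≥0∞} (hf : Measurable f) :
    ∫⁻ φ in Ico 0 T, ∑' k : ℤ, f (φ + T * k) = ∫⁻ x, f x := by
  let e : ℤ ≃ AddSubgroup.zmultiples T := Equiv.ofBijective (fun n => ⟨n • T, n, rfl⟩)
    ⟨fun m n h => (zsmul_left_strictMono hT).injective (congrArg Subtype.val h),
     fun ⟨_, n, hn⟩ => ⟨n, Subtype.ext hn⟩⟩
  rw [(isAddFundamentalDomain_Ioc hT 0 volume).lintegral_eq_tsum'' f, zero_add, ← e.tsum_eq,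
    setLIntegral_congr Ico_ae_eq_Ioc, lintegral_tsum (f := fun (k : ℤ) φ => f (φ + T * k))
      fun k => (hf.comp (measurable_add_const _)).aemeasurable]
  refine tsum_congr fun k => setLIntegral_congr_fun measurableSet_Ioc fun φ _ => ?_
  simp [e, zsmul_eq_mul, add_comm, mul_comm]

section Density

variable {p : ℝ → ℝ}

theorem isProbabilityMeasure_withDensity_ofReal (hint : ∫⁻ x, ENNReal.ofReal (p x) = 1) :
    IsProbabilityMeasure (volume.withDensity fun x => ENNReal.ofReal (p x)) :=
  ⟨by rw [withDensity_apply _ MeasurableSet.univ, Measure.restrict_univ, hint]⟩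

theorem cdf_withDensity_ofReal (hmeas : Measurable p) (hnn : ∀ x, 0 ≤ p x)
    (hint : ∫⁻ x, ENNReal.ofReal (p x) = 1) (x : ℝ) :
    cdf (volume.withDensity fun t => ENNReal.ofReal (p t)) x = ∫ t in Iic x, p t := by
  have := isProbabilityMeasure_withDensity_ofReal hint
  rw [cdf_eq_real, measureReal_def, withDensity_apply _ measurableSet_Iic,
    integral_eq_lintegral_of_nonneg_ae (Eventually.of_forall hnn)
      hmeas.aestronglyMeasurable.restrict]

theorem map_cdf_withDensity_ofReal (hmeas : Measurable p) (hnn : ∀ x, 0 ≤ p x)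
    (hint : ∫⁻ x, ENNReal.ofReal (p x) = 1) :
    (volume.withDensity fun t => ENNReal.ofReal (p t)).map
      (cdf (volume.withDensity fun t => ENNReal.ofReal (p t))) = volume.restrict (Ioo 0 1) := by
  have := isProbabilityMeasure_withDensity_ofReal hint
  have hpint : Integrable p :=
    ⟨hmeas.aestronglyMeasurable, (hasFiniteIntegral_iff_ofReal (Eventually.of_forall hnn)).2
      (hint ▸ one_lt_top)⟩
  refine map_cdf_eq_restrict_Ioo _ ?_
  rw [funext (cdf_withDensity_ofReal hmeas hnn hint)]
  exact continuous_setIntegral_Iic hpint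

theorem lintegral_comp_cdf_mul_ofReal (hmeas : Measurable p) (hnn : ∀ x, 0 ≤ p x)
    (hint : ∫⁻ x, ENNReal.ofReal (p x) = 1) {g : ℝ → ℝ≥0∞} (hg : Measurable g) :
    ∫⁻ t, g (cdf (volume.withDensity fun x => ENNReal.ofReal (p x)) t) * ENNReal.ofReal (p t) =
      ∫⁻ u in Ioo 0 1, g u := by
  set F := cdf (volume.withDensity fun x => ENNReal.ofReal (p x))
  have hgF : Measurable fun t => g (F t) := hg.comp (monotone_cdf _).measurable
  rw [← map_cdf_withDensity_ofReal hmeas hnn hint, lintegral_map hg (monotone_cdf _).measurable,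
    lintegral_withDensity_eq_lintegral_mul _ hmeas.ennreal_ofReal hgF]
  simp only [Pi.mul_apply, mul_comm]

theorem lintegral_Ico_tsum_copula_density {T : ℝ} (hT : 0 < T) (hmeas : Measurable p)
    (hnn : ∀ x, 0 ≤ p x) (hint : ∫⁻ x, ENNReal.ofReal (p x) = 1) {c : ℝ → ℝ → ℝ}
    (hc : Measurable (Function.uncurry c)) (v : ℝ) {b : ℝ} (hb : 0 ≤ b) :
    ∫⁻ φ in Ico 0 T, ∑' k : ℤ, ENNReal.ofReal
        (c (cdf (volume.withDensity fun x => ENNReal.ofReal (p x)) (φ + T * k)) v *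
          p (φ + T * k) * b) =
      (∫⁻ u in Ioo 0 1, ENNReal.ofReal (c u v)) * ENNReal.ofReal b := by
  set F := cdf (volume.withDensity fun x => ENNReal.ofReal (p x))
  have hcv : Measurable fun u => ENNReal.ofReal (c u v) :=
    (hc.comp (measurable_id.prodMk measurable_const)).ennreal_ofReal
  have hg : Measurable fun x => ENNReal.ofReal (c (F x) v) * ENNReal.ofReal (p x) :=
    (hcv.comp (monotone_cdf _).measurable).mul hmeas.ennreal_ofReal
  calc _ = ∫⁻ φ in Ico 0 T, (∑' k : ℤ, ENNReal.ofReal (c (F (φ + T * k)) v) *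
        ENNReal.ofReal (p (φ + T * k))) * ENNReal.ofReal b := by
        simp_rw [ENNReal.ofReal_mul' hb, ENNReal.ofReal_mul' (hnn _), ENNReal.tsum_mul_right]
    _ = (∫⁻ x, ENNReal.ofReal (c (F x) v) * ENNReal.ofReal (p x)) * ENNReal.ofReal b := by
        rw [lintegral_mul_const' _ _ ofReal_ne_top, lintegral_Ico_tsum_add_mul hT hg]
    _ = _ := by rw [lintegral_comp_cdf_mul_ofReal hmeas hnn hint hcv]

end Density

theorem pw_copula_marginal_linear_general
    (p₁ p₂ : ℝ → ℝ) (h₁meas : Measurable p₁) (h₂meas : Measurable p₂)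
    (h₁nn : ∀ x, 0 ≤ p₁ x) (h₂nn : ∀ x, 0 ≤ p₂ x)
    (h₁int : ∫⁻ x, ENNReal.ofReal (p₁ x) = 1)
    (h₂int : ∫⁻ x, ENNReal.ofReal (p₂ x) = 1)
    (F₁ F₂ : ℝ → ℝ)
    (hF₁ : ∀ x, F₁ x = ∫ t in Set.Iic x, p₁ t)
    (hF₂ : ∀ x, F₂ x = ∫ t in Set.Iic x, p₂ t)
    (c : ℝ → ℝ → ℝ) (hcmeas : Measurable (Function.uncurry c))
    (hc₂ : ∀ᵐ v ∂(volume.restrict (Set.Ioo (0:ℝ) 1)),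
      ∫⁻ u in Set.Ioo (0:ℝ) 1, ENNReal.ofReal (c u v) = 1) :
    ∀ᵐ y : ℝ,
      ∫⁻ φ in Set.Ico (0 : ℝ) (2 * π),
        (∑' k : ℤ, ENNReal.ofReal
          (c (F₁ (φ + 2 * π * k)) (F₂ y) * p₁ (φ + 2 * π * k) * p₂ y)) =
        ENNReal.ofReal (p₂ y) := by
  obtain rfl : F₁ = cdf (volume.withDensity fun x => ENNReal.ofReal (p₁ x)) :=
    funext fun x => (hF₁ x).trans (cdf_withDensity_ofReal h₁meas h₁nn h₁int x).symm
  set μ₂ := volume.withDensity fun x => ENNReal.ofReal (p₂ x)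
  obtain rfl : F₂ = cdf μ₂ :=
    funext fun x => (hF₂ x).trans (cdf_withDensity_ofReal h₂meas h₂nn h₂int x).symm
  have hc₂' : ∀ᵐ y ∂μ₂, ∫⁻ u in Ioo 0 1, ENNReal.ofReal (c u (cdf μ₂ y)) = 1 :=
    ae_of_ae_map (monotone_cdf _).measurable.aemeasurable
      (by rwa [map_cdf_withDensity_ofReal h₂meas h₂nn h₂int])
  filter_upwards [(ae_withDensity_iff h₂meas.ennreal_ofReal).1 hc₂'] with y hy
  rw [lintegral_Ico_tsum_copula_density two_pi_pos h₁meas h₁nn h₁int hcmeas _ (h₂nn y)]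
  by_cases hp₂ : ENNReal.ofReal (p₂ y) = 0
  · rw [hp₂, mul_zero]
  · rw [hy hp₂, one_mul]

/-- Marginalizing the partially wrapped joint density
`p^{PW}(φ, y) = ∑_{k∈ℤ} c(F₁(φ+2πk), F₂(y)) p₁(φ+2πk) p₂(y)`
over the circular component `φ ∈ [0, 2π)` yields the linear margin `p₂`. -/
theorem pw_copula_marginal_linear
    (p₁ p₂ : ℝ → ℝ) (h₁meas : Measurable p₁) (h₂meas : Measurable p₂)
    (h₁nn : ∀ x, 0 ≤ p₁ x) (h₂nn : ∀ x, 0 ≤ p₂ x)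
    (h₁int : ∫⁻ x, ENNReal.ofReal (p₁ x) = 1)
    (h₂int : ∫⁻ x, ENNReal.ofReal (p₂ x) = 1)
    (F₁ F₂ : ℝ → ℝ)
    (hF₁ : ∀ x, F₁ x = ∫ t in Set.Iic x, p₁ t)
    (hF₂ : ∀ x, F₂ x = ∫ t in Set.Iic x, p₂ t)
    (c : ℝ → ℝ → ℝ) (hcmeas : Measurable (Function.uncurry c))
    (hcnn : ∀ u v, 0 ≤ c u v)
    (hc₁ : ∀ᵐ u ∂(volume.restrict (Set.Ioo (0:ℝ) 1)),
      ∫⁻ v in Set.Ioo (0:ℝ) 1, ENNReal.ofReal (c u v) = 1)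
    (hc₂ : ∀ᵐ v ∂(volume.restrict (Set.Ioo (0:ℝ) 1)),
      ∫⁻ u in Set.Ioo (0:ℝ) 1, ENNReal.ofReal (c u v) = 1) :
    ∀ᵐ y : ℝ,
      ∫⁻ φ in Set.Ico (0 : ℝ) (2 * π),
        (∑' k : ℤ, ENNReal.ofReal
          (c (F₁ (φ + 2 * π * k)) (F₂ y) * p₁ (φ + 2 * π * k) * p₂ y)) =
        ENNReal.ofReal (p₂ y) :=
  pw_copula_marginal_linear_general p₁ p₂ h₁meas h₂meas h₁nn h₂nn h₁int h₂int F₁ F₂ hF₁ hF₂ c hcmeas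
    hc₂
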